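/- Let u : ℝ → ℝ be the pseudo-peakon profile u(x) = (1/2) e^{-|x|}(1+|x|) and let û(ξ) = ∫_ℝ e^{-iξx} u(x) dx denote its Fourier transform. For a real number s, the weighted integral ∫_ℝ (1+ξ²)^s |û(ξ)|² dξ is finite if and only if s < 7/2. In particular, u belongs to the Sobolev space H^s(ℝ) precisely for s < 7/2. -/

import Mathlib

/-!
Splitting the line at the origin, each half contributes a Laplace transform
`∫₀^∞ (1 + x) e^{-cx} dx = 1/c + 1/c²` with `c = 1 ± iξ`, and since these two values of `c`
sum to `2` and multiply to `1 + ξ²`, the transform is `û(ξ) = 2 / (1 + ξ²)²`. The weighted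
integrand is then `4 (1 + ξ²)^{s-4}`, and `(1 + ξ²)^r` is integrable on `ℝ` exactly when
`2r < -1`, which for `r = s - 4` reads `s < 7/2`.
-/

open MeasureTheory

/-- The RZQ pseudo-peakon profile `u(x) = (1/2) e^{-|x|} (1 + |x|)`. -/
noncomputable def pseudoPeakon (x : ℝ) : ℝ := (1 / 2) * Real.exp (-|x|) * (1 + |x|)

/-- The Fourier transform `û(ξ) = ∫_ℝ e^{-iξx} u(x) dx` of the pseudo-peakon profile. -/
noncomputable def pseudoPeakonHat (ξ : ℝ) : ℂ :=
  ∫ x : ℝ, Complex.exp (-(Complex.I * ξ * x)) * (pseudoPeakon x : ℂ)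

open Set Filter Topology
open scoped Complex

section Laplace

variable {c : ℂ}

lemma norm_cexp_neg_mul_ofReal (c : ℂ) (x : ℝ) :
    ‖cexp (-c * x)‖ = Real.exp (-c.re * x) := by
  simp [Complex.norm_exp]

lemma tendsto_cexp_neg_mul_atTop (hc : 0 < c.re) :
    Tendsto (fun x : ℝ => cexp (-c * x)) atTop (𝓝 0) := by
  simpa [Complex.tendsto_exp_nhds_zero_iff] using
    tendsto_id.const_mul_atTop_of_neg (neg_lt_zero.mpr hc)

lemma tendsto_ofReal_mul_cexp_neg_mul_atTop (hc : 0 < c.re) :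
    Tendsto (fun x : ℝ => x * cexp (-c * x)) atTop (𝓝 0) := by
  rw [tendsto_zero_iff_norm_tendsto_zero]
  refine (tendsto_rpow_mul_exp_neg_mul_atTop_nhds_zero 1 c.re hc).congr' ?_
  filter_upwards [eventually_ge_atTop 0] with x hx
  rw [norm_mul, norm_cexp_neg_mul_ofReal, Complex.norm_real, Real.norm_of_nonneg hx, Real.rpow_one]

lemma integrableOn_one_add_mul_cexp_neg_mul_Ioi (hc : 0 < c.re) :
    IntegrableOn (fun x : ℝ => (1 + x) * cexp (-c * x)) (Ioi 0) := by
  have hexp := integrableOn_exp_mul_complex_Ioi (a := -c) (by simpa) 0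
  have hmul : IntegrableOn (fun x : ℝ => x * cexp (-c * x)) (Ioi 0) := by
    refine (integrableOn_rpow_mul_exp_neg_mul_rpow (p := 1) (s := 1) (by norm_num) one_pos hc).mono'
      (by fun_prop) ((ae_restrict_iff' measurableSet_Ioi).2 (ae_of_all _ fun x hx => ?_))
    rw [norm_mul, norm_cexp_neg_mul_ofReal, Complex.norm_real, Real.norm_of_nonneg (le_of_lt hx)]
    simp
  refine (hexp.add hmul).congr_fun (fun x _ => ?_) measurableSet_Ioi
  simp only [Pi.add_apply]
  ring

lemma integral_one_add_mul_cexp_neg_mul_Ioi (hc : 0 < c.re) :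
    ∫ x : ℝ in Ioi 0, (1 + x) * cexp (-c * x) = 1 / c + 1 / c ^ 2 := by
  have hc₀ : c ≠ 0 := fun h => by simp [h] at hc
  set F : ℝ → ℂ := fun y => -((1 + y) / c + 1 / c ^ 2) * cexp (-c * y)
  have hderiv : ∀ x ∈ Ici (0 : ℝ), HasDerivAt F ((1 + x) * cexp (-c * x)) x := by
    intro x _
    have hlin : HasDerivAt (fun z : ℂ => -((1 + z) / c + 1 / c ^ 2)) (-(1 / c)) x :=
      ((((hasDerivAt_id' (x : ℂ)).const_add 1).div_const c).add_const (1 / c ^ 2)).neg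
    have hexp : HasDerivAt (fun z : ℂ => cexp (-c * z)) (cexp (-c * x) * (-c * 1)) x :=
      ((hasDerivAt_id' (x : ℂ)).const_mul (-c)).cexp
    refine (hlin.mul hexp).comp_ofReal.congr_deriv ?_
    field_simp
    ring
  have hlim : Tendsto F atTop (𝓝 0) := by
    have := ((tendsto_cexp_neg_mul_atTop hc).const_mul (-(1 / c + 1 / c ^ 2))).add
      ((tendsto_ofReal_mul_cexp_neg_mul_atTop hc).const_mul (-(1 / c)))
    simp only [mul_zero, add_zero] at this
    refine this.congr fun y => ?_
    simp only [F]
    ring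
  rw [integral_Ioi_of_hasDerivAt_of_tendsto' hderiv
    (integrableOn_one_add_mul_cexp_neg_mul_Ioi hc) hlim]
  simp [F]

end Laplace

theorem integral_eq_integral_Ioi_add_integral_Ioi_comp_neg {E : Type*}
    [NormedAddCommGroup E] [NormedSpace ℝ E] {f : ℝ → E} (hpos : IntegrableOn f (Ioi 0))
    (hneg : IntegrableOn (fun x => f (-x)) (Ioi 0)) :
    ∫ x, f x = (∫ x in Ioi 0, f x) + ∫ x in Ioi 0, f (-x) := by
  have hIic : IntegrableOn f (Iic 0) := by
    rw [integrableOn_Iic_iff_integrableOn_Iio]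
    simpa only [neg_neg] using
      IntegrableOn.comp_neg_Iio (f := fun x => f (-x)) (c := (0 : ℝ)) (by rwa [neg_zero])
  rw [← intervalIntegral.integral_Iic_add_Ioi hIic hpos, integral_comp_neg_Ioi, neg_zero,
    add_comm]

lemma inv_add_inv_sq_add_inv_add_inv_sq {K : Type*} [Field K] {a b : K}
    (ha : a ≠ 0) (hb : b ≠ 0) (hab : a + b = 2) :
    1 / a + 1 / a ^ 2 + (1 / b + 1 / b ^ 2) = 4 / (a * b) ^ 2 := by
  obtain rfl : b = 2 - a := eq_sub_of_add_eq' hab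
  field_simp
  ring

lemma integrable_one_add_sq_rpow_iff {r : ℝ} :
    Integrable (fun ξ : ℝ => (1 + ξ ^ 2) ^ r) ↔ r < -1 / 2 := by
  constructor
  · intro hint
    by_contra! hr
    refine not_integrableOn_Ioi_inv (a := 1) ((hint.integrableOn.const_mul 2).mono' (by fun_prop)
      ((ae_restrict_iff' measurableSet_Ioi).2 (ae_of_all _ fun ξ (hξ : 1 < ξ) => ?_)))
    have hsqrt : √(1 + ξ ^ 2) ≤ 2 * ξ := Real.sqrt_le_iff.mpr ⟨by linarith, by nlinarith⟩
    calc ‖ξ⁻¹‖ = 2 * (2 * ξ)⁻¹ := by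
          rw [Real.norm_of_nonneg (by positivity)]; field_simp
      _ ≤ 2 * (√(1 + ξ ^ 2))⁻¹ := by gcongr
      _ = 2 * (1 + ξ ^ 2) ^ (-1 / 2 : ℝ) := by
          rw [Real.sqrt_eq_rpow, ← Real.rpow_neg (by positivity)]; norm_num
      _ ≤ 2 * (1 + ξ ^ 2) ^ r := by gcongr; nlinarith
  · intro hr
    have := integrable_rpow_neg_one_add_norm_sq (E := ℝ) (μ := volume) (r := -2 * r)
      (by rw [Module.finrank_self]; push_cast; linarith)
    simpa [Real.norm_eq_abs, sq_abs, show -(-2 * r) / 2 = r by ring] using this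

lemma pseudoPeakon_neg (x : ℝ) : pseudoPeakon (-x) = pseudoPeakon x := by
  simp [pseudoPeakon]

lemma cexp_mul_pseudoPeakon_of_nonneg (η : ℝ) {x : ℝ} (hx : 0 ≤ x) :
    cexp (-(Complex.I * η * x)) * pseudoPeakon x =
      1 / 2 * ((1 + x) * cexp (-(1 + Complex.I * η) * x)) := by
  rw [pseudoPeakon, abs_of_nonneg hx]
  push_cast
  rw [show -(1 + Complex.I * η) * x = -(Complex.I * η * x) + -x by ring, Complex.exp_add]
  ring

theorem pseudoPeakonHat_eq (ξ : ℝ) :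
    pseudoPeakonHat ξ = ((2 / (1 + ξ ^ 2) ^ 2 : ℝ) : ℂ) := by
  set f : ℝ → ℂ := fun x => cexp (-(Complex.I * ξ * x)) * pseudoPeakon x
  have hre (η : ℝ) : 0 < (1 + Complex.I * η).re := by simp
  have hpos : EqOn f (fun x => 1 / 2 * ((1 + x) * cexp (-(1 + Complex.I * ξ) * x))) (Ioi 0) :=
    fun x hx => cexp_mul_pseudoPeakon_of_nonneg ξ (le_of_lt hx)
  have hneg : EqOn (fun x => f (-x))
      (fun x => 1 / 2 * ((1 + x) * cexp (-(1 + Complex.I * (-ξ : ℝ)) * x))) (Ioi 0) := by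
    intro x hx
    simp only [f, pseudoPeakon_neg, ← cexp_mul_pseudoPeakon_of_nonneg (-ξ) (le_of_lt hx)]
    push_cast
    ring_nf
  have hint (η : ℝ) :
      IntegrableOn (fun x : ℝ => 1 / 2 * ((1 + x) * cexp (-(1 + Complex.I * η) * x))) (Ioi 0) :=
    (integrableOn_one_add_mul_cexp_neg_mul_Ioi (hre η)).const_mul (1 / 2 : ℂ)
  have hprod : (1 + Complex.I * ξ) * (1 + Complex.I * (-ξ : ℝ)) = 1 + ξ ^ 2 := by
    push_cast
    linear_combination (-(ξ : ℂ) ^ 2) * Complex.I_sq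
  rw [pseudoPeakonHat, integral_eq_integral_Ioi_add_integral_Ioi_comp_neg
      ((hint ξ).congr_fun hpos.symm measurableSet_Ioi)
      ((hint (-ξ)).congr_fun hneg.symm measurableSet_Ioi),
    setIntegral_congr_fun measurableSet_Ioi hpos, setIntegral_congr_fun measurableSet_Ioi hneg,
    integral_const_mul, integral_const_mul, integral_one_add_mul_cexp_neg_mul_Ioi (hre ξ),
    integral_one_add_mul_cexp_neg_mul_Ioi (hre (-ξ)), ← mul_add,
    inv_add_inv_sq_add_inv_add_inv_sq (Complex.ne_zero_of_re_pos (hre ξ))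
      (Complex.ne_zero_of_re_pos (hre (-ξ))) (by push_cast; ring), hprod]
  push_cast
  ring

lemma one_add_sq_rpow_mul_norm_pseudoPeakonHat_sq (s ξ : ℝ) :
    (1 + ξ ^ 2) ^ s * ‖pseudoPeakonHat ξ‖ ^ 2 = 4 * (1 + ξ ^ 2) ^ (s - 4) := by
  have hpos : (0 : ℝ) < 1 + ξ ^ 2 := by positivity
  rw [pseudoPeakonHat_eq, Complex.norm_real, Real.norm_of_nonneg (by positivity),
    Real.rpow_sub hpos, Real.rpow_ofNat]
  field_simp
  ring

/-- The weighted integral `∫_ℝ (1+ξ²)^s |û(ξ)|² dξ` is finite if and only if `s < 7/2`;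
i.e. the pseudo-peakon belongs to `H^s(ℝ)` precisely for `s < 7/2`. -/
theorem pseudoPeakon_mem_Hs_iff (s : ℝ) :
    (∫⁻ ξ : ℝ, ENNReal.ofReal ((1 + ξ ^ 2) ^ s * ‖pseudoPeakonHat ξ‖ ^ 2)) < ⊤ ↔
    s < 7 / 2 := by
  simp_rw [one_add_sq_rpow_mul_norm_pseudoPeakonHat_sq, lt_top_iff_ne_top]
  rw [lintegral_ofReal_ne_top_iff_integrable (by fun_prop : Measurable _).aestronglyMeasurable
      (ae_of_all _ fun ξ => by positivity),
    integrable_const_mul_iff (isUnit_iff_ne_zero.mpr four_ne_zero), integrable_one_add_sq_rpow_iff]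
  constructor <;> intro h <;> linarith
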